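/- arXiv:0708.2054 — 2 statements merged into one kernel-verified Lean document; each statement's English description precedes it below -/
import Mathlib

section
/- Let G be a group, H a subgroup of G, and T a subgroup of H such that for every g ∈ G with g⁻¹Tg ⊆ H there exists h ∈ H with g⁻¹Tg = h⁻¹Th. Then the map sending n ∈ N_G(T) to the coset nH induces a well-defined bijection from the coset space N_G(T)/(N_G(T) ∩ H) onto the set of fixed points of the left-translation action of T on G/H; here N_G(T) ∩ H = N_H(T) is the normalizer of T in H. -/
/-!
A coset `gH` is fixed by `T` exactly when `g⁻¹Tg ⊆ H`. The conjugacy hypothesis then provides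
`h ∈ H` with `g⁻¹Tg = h⁻¹Th`, so `gh⁻¹` normalizes `T` and represents the same coset `gH`.
Injectivity is formal: two elements of `N_G(T)` lie in the same coset of `H` exactly when they
lie in the same coset of `N_G(T) ∩ H`.
-/

namespace Subgroup

variable {G : Type*} [Group G]

def quotientSubgroupOfEmbedding (H K : Subgroup G) : K ⧸ H.subgroupOf K ↪ G ⧸ H where
  toFun := Quotient.map' Subtype.val fun _ _ h =>
    QuotientGroup.leftRel_apply.2 (mem_subgroupOf.1 (QuotientGroup.leftRel_apply.1 h))
  inj' := Quotient.ind₂' fun _ _ h =>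
    Quotient.sound' (QuotientGroup.leftRel_apply.2 (mem_subgroupOf.2 (QuotientGroup.eq.1 h)))

@[simp]
theorem quotientSubgroupOfEmbedding_mk (H K : Subgroup G) (k : K) :
    quotientSubgroupOfEmbedding H K k = ((k : G) : G ⧸ H) :=
  rfl

theorem range_quotientSubgroupOfEmbedding (H K : Subgroup G) :
    Set.range (quotientSubgroupOfEmbedding H K) = (QuotientGroup.mk : G → G ⧸ H) '' K := by
  ext x
  constructor
  · rintro ⟨q, rfl⟩
    obtain ⟨k, rfl⟩ := QuotientGroup.mk_surjective q
    exact ⟨k, k.2, rfl⟩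
  · rintro ⟨k, hk, rfl⟩
    exact ⟨(⟨k, hk⟩ : K), rfl⟩

theorem smul_mk_eq_mk_iff {H : Subgroup G} {t g : G} :
    t • (g : G ⧸ H) = g ↔ g⁻¹ * t⁻¹ * g ∈ H := by
  rw [MulAction.Quotient.smul_mk, smul_eq_mul, QuotientGroup.eq, mul_inv_rev, mul_assoc]

theorem forall_smul_mk_eq_mk_iff {H T : Subgroup G} {g : G} :
    (∀ t ∈ T, t • (g : G ⧸ H) = g) ↔ ∀ t ∈ T, g⁻¹ * t * g ∈ H := by
  simp_rw [smul_mk_eq_mk_iff]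
  exact ⟨fun h t ht => by simpa using h t⁻¹ (inv_mem ht), fun h t ht => h t⁻¹ (inv_mem ht)⟩

theorem mul_inv_mem_normalizer_of_conj_image_eq {s : Set G} {g h : G}
    (hgh : (fun t => g⁻¹ * t * g) '' s = (fun t => h⁻¹ * t * h) '' s) :
    g * h⁻¹ ∈ normalizer s := by
  rw [mem_normalizer_iff_conj_image_eq]
  have hconj_g := congrArg (MulAut.conj g '' ·) hgh
  simp only [Set.image_image, MulAut.conj_apply] at hconj_g
  simpa [Set.image_image, mul_assoc] using hconj_g.symm

end Subgroup

/-- Under the conjugacy property of maximal tori, the map `n ↦ nH` induces a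
well-defined bijection from `N_G(T)/(N_G(T) ∩ H)` onto the fixed-point set of the
left-translation action of `T` on `G/H`.  Here `N_G(T) ∩ H = N_H(T)`. -/
theorem normalizer_quotient_bijection_fixed_points {G : Type*} [Group G]
    (H T : Subgroup G) (hTH : T ≤ H)
    (hconj : ∀ g : G, (∀ t ∈ T, g⁻¹ * t * g ∈ H) →
      ∃ h ∈ H, (fun t => g⁻¹ * t * g) '' (T : Set G) = (fun t => h⁻¹ * t * h) '' (T : Set G)) :
    ∃ φ : (Subgroup.normalizer (T : Set G)) ⧸ H.subgroupOf (Subgroup.normalizer (T : Set G)) → G ⧸ H,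
      (∀ n : (Subgroup.normalizer (T : Set G)), φ (QuotientGroup.mk n) = QuotientGroup.mk (n : G)) ∧
      Function.Injective φ ∧
      Set.range φ = {x : G ⧸ H | ∀ t ∈ T, (t : G) • x = x} := by
  refine ⟨Subgroup.quotientSubgroupOfEmbedding H _, Subgroup.quotientSubgroupOfEmbedding_mk H _,
    (Subgroup.quotientSubgroupOfEmbedding H _).injective, ?_⟩
  rw [Subgroup.range_quotientSubgroupOfEmbedding]
  apply Set.Subset.antisymm
  · rintro _ ⟨n, hn, rfl⟩
    rw [Set.mem_ofPred_eq, Subgroup.forall_smul_mk_eq_mk_iff]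
    exact fun t ht => hTH ((Subgroup.mem_set_normalizer_iff''.1 hn t).1 ht)
  · intro x hx
    obtain ⟨g, rfl⟩ := QuotientGroup.mk_surjective x
    rw [Set.mem_ofPred_eq, Subgroup.forall_smul_mk_eq_mk_iff] at hx
    obtain ⟨h, hH, hgh⟩ := hconj g hx
    refine ⟨g * h⁻¹, Subgroup.mul_inv_mem_normalizer_of_conj_image_eq hgh, QuotientGroup.eq.2 ?_⟩
    simpa [mul_assoc] using hH
end

section
/- Let n ≥ 2 and 1 ≤ l, and let ω = (i_1, …, i_m) with m = n(n−1)/2 be a sequence of nonnegative integers with Σ_{k=1}^{m} k·i_k = m whose nonzero entries occur exactly at positions k_1, …, k_l with k_p ≤ 2n−3 for all p; write k_p = 2(n−1) − q_p, so q_p ≥ 1. If n ≥ 2l and Σ_{p=1}^{l} q_p < l(2l−1), then in ℤ[a_1,…,a_m][X_1,…,X_n][t] with f(s) = 1 + Σ_{i=1}^{m} a_i s^i and G(t) = Σ_{σ ∈ S_n} sgn(σ) Π_{1≤i<j≤n} f(t(X_{σ(i)} − X_{σ(j)})), the coefficient of the monomial t^m · a_1^{i_1} ⋯ a_m^{i_m}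 in G(t) is the zero polynomial in X_1, …, X_n. (Equivalently, s_ω(U(n)/Tⁿ) = 0.) -/
/-- The set of pairs `i < j` in `Fin n × Fin n`. -/
def flagPairs (n : ℕ) : Finset (Fin n × Fin n) :=
  Finset.univ.filter (fun p => p.1 < p.2)

/-- `f(t·d) = 1 + Σᵢ aᵢ dⁱ tⁱ` as an element of `ℤ[a₁,…,a_m][X₁,…,Xₙ][t]`. -/
noncomputable def fFactor (n m : ℕ) (d : MvPolynomial (Fin n) ℤ) :
    Polynomial (MvPolynomial (Fin m) (MvPolynomial (Fin n) ℤ)) :=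
  1 + ∑ i : Fin m,
    Polynomial.C (MvPolynomial.X i * MvPolynomial.C (d ^ (i.1 + 1))) * Polynomial.X ^ (i.1 + 1)

/-!
Expanding the product, the coefficient of `t^m a^ω` is `∑_σ sgn σ · σ(P)`, where `P` is a sum of
products `∏_{i<j} (X_i - X_j)^{w_{ij}}` over edge weightings `w` of the complete graph whose weights
have total `m = n(n-1)/2` and realise every `k_p`. An alternating sum of this shape vanishes as soon
as `P` has no monomial `X^β` with pairwise distinct exponents, and such a `β` of degree
`0 + 1 + ⋯ + (n-1)` would be a permutation of `{0, …, n-1}`. Pick one edge of weight `k_p` for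
each `p` and let `V` be the at most `2l` endpoints of these edges. The monomials of the edge
factors inside `V` put all their degree on `V`, so `∑_{v ∈ V} β_v ≥ ∑_p k_p`; distinct exponents
give `∑_{v ∈ V} β_v ≤ (n-1) + ⋯ + (n-2l)`, and `∑_p q_p < l(2l-1)` says exactly that
`∑_p k_p` exceeds this bound.
-/

open Finset MvPolynomial

theorem Finset.sum_range_card_le_sum (s : Finset ℕ) : ∑ i ∈ range #s, i ≤ ∑ x ∈ s, x := by
  refine Finset.induction_on_max s (by simp) fun a s has ih => ?_
  have has' : a ∉ s := fun h => (has a h).false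
  have hcard : #s ≤ a := by simpa using card_le_card fun x hx => mem_range.2 (has x hx)
  rw [card_insert_of_notMem has', sum_range_succ, sum_insert has']
  omega

theorem Finset.sum_range_card_le_sum_of_injOn {α : Type*} {s : Finset α} {f : α → ℕ}
    (hf : Set.InjOn f s) : ∑ i ∈ range #s, i ≤ ∑ x ∈ s, f x := by
  classical
  simpa [card_image_of_injOn hf, sum_image hf] using (s.image f).sum_range_card_le_sum

theorem sum_range_lt_of_sum_sub_lt {n l : ℕ} (k : Fin l → ℕ) (h2l : 2 * l ≤ n)
    (hq : ∑ p, (2 * (n - 1) - k p) < l * (2 * l - 1)) :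
    ∑ i ∈ range n, i < ∑ i ∈ range (n - 2 * l), i + ∑ p, k p := by
  have hk : l * (2 * (n - 1)) ≤ ∑ p, k p + ∑ p, (2 * (n - 1) - k p) := by
    simpa [← sum_add_distrib] using
      sum_le_sum fun p (_ : p ∈ univ) => le_add_tsub (a := 2 * (n - 1)) (b := k p)
  obtain ⟨a, rfl⟩ := Nat.exists_eq_add_of_le' h2l
  obtain _ | c := l
  · simp at hq
  have htri := sum_range_id_mul_two (2 * (c + 1))
  rw [Nat.add_sub_cancel, sum_range_add, sum_add_distrib, sum_const, card_range, smul_eq_mul]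
  rw [show a + 2 * (c + 1) - 1 = a + 2 * c + 1 by omega] at hk hq
  rw [show 2 * (c + 1) - 1 = 2 * c + 1 by omega] at hq htri
  nlinarith

theorem two_mul_sub_three_le_mul_sub_one_div_two (n : ℕ) : 2 * n - 3 ≤ n * (n - 1) / 2 := by
  rw [Nat.le_div_iff_mul_le two_pos]
  rcases n with _ | _ | n
  · simp
  · simp
  · rw [show 2 * (n + 2) - 3 = 2 * n + 1 by omega, Nat.add_sub_cancel]
    nlinarith [Nat.le_mul_self n]

section WeightedDegree

variable {R σ ι : Type*} [CommRing R] (u v : ι → σ) (w : ι → ℕ)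

theorem isWeightedHomogeneous_prod_X_sub_X_pow (wt : σ → ℕ) (E : Finset ι)
    (hE : ∀ i ∈ E, wt (u i) = 1 ∧ wt (v i) = 1) :
    IsWeightedHomogeneous wt (∏ i ∈ E, (X (u i) - X (v i) : MvPolynomial σ R) ^ w i)
      (∑ i ∈ E, w i) := by
  refine IsWeightedHomogeneous.prod _ _ _ fun i hi => ?_
  have hX : IsWeightedHomogeneous wt (X (u i) - X (v i) : MvPolynomial σ R) 1 :=
    ((hE i hi).1 ▸ isWeightedHomogeneous_X R wt (u i)).sub
      ((hE i hi).2 ▸ isWeightedHomogeneous_X R wt (v i))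
  simpa using hX.pow (w i)

variable [Fintype ι] [Fintype σ] [DecidableEq σ]

theorem Finsupp.weight_indicator_eq_sum (V : Finset σ) (β : σ →₀ ℕ) :
    Finsupp.weight (fun x => if x ∈ V then 1 else 0) β = ∑ x ∈ V, β x := by
  simp [Finsupp.weight_apply, Finsupp.sum_fintype, Finset.sum_ite_mem]

theorem sum_le_sum_apply_of_mem_support_prod_X_sub_X_pow (V : Finset σ) (E : Finset ι)
    (hE : ∀ i ∈ E, u i ∈ V ∧ v i ∈ V) {β : σ →₀ ℕ}
    (hβ : β ∈ (∏ i, (X (u i) - X (v i) : MvPolynomial σ R) ^ w i).support) :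
    ∑ i ∈ E, w i ≤ ∑ x ∈ V, β x := by
  classical
  rw [← prod_mul_prod_compl E] at hβ
  obtain ⟨a, ha, b, -, rfl⟩ := mem_add.1 (support_mul _ _ hβ)
  have := isWeightedHomogeneous_prod_X_sub_X_pow (R := R) u v w (fun x => if x ∈ V then 1 else 0)
    E fun i hi => by simp [hE i hi]
  rw [← Finsupp.weight_indicator_eq_sum, map_add, this (mem_support_iff.1 ha)]
  exact Nat.le_add_right _ _

theorem sum_apply_eq_sum_of_mem_support_prod_X_sub_X_pow {β : σ →₀ ℕ}
    (hβ : β ∈ (∏ i, (X (u i) - X (v i) : MvPolynomial σ R) ^ w i).support) :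
    ∑ x, β x = ∑ i, w i := by
  rw [← Finsupp.weight_indicator_eq_sum]
  exact isWeightedHomogeneous_prod_X_sub_X_pow u v w (fun x => if x ∈ univ then 1 else 0) univ
    (fun i _ => by simp) (mem_support_iff.1 hβ)

end WeightedDegree

theorem coeff_prod_X_sub_X_pow_eq_zero_of_injective {R ι : Type*} [CommRing R] [Fintype ι]
    {n l : ℕ} (u v : ι → Fin n) (w : ι → ℕ) (hw : ∑ i, w i = ∑ i ∈ range n, i)
    (k : Fin l → ℕ) (hk : Function.Injective k) (hkw : ∀ p, ∃ i, w i = k p) (h2l : 2 * l ≤ n)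
    (hq : ∑ p, (2 * (n - 1) - k p) < l * (2 * l - 1)) {β : Fin n →₀ ℕ}
    (hβ : Function.Injective β) :
    coeff β (∏ i, (X (u i) - X (v i) : MvPolynomial (Fin n) R) ^ w i) = 0 := by
  classical
  by_contra hne
  replace hne := mem_support_iff.2 hne
  choose e he using hkw
  have he_inj : Function.Injective e := fun p q h => hk (by rw [← he, ← he, h])
  set E := univ.image e
  set V := E.image u ∪ E.image v
  have hV : #V ≤ 2 * l :=
    calc #V ≤ #(E.image u) + #(E.image v) := card_union_le _ _
      _ ≤ #E + #E := add_le_add card_image_le card_image_le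
      _ ≤ 2 * l := by have : #E ≤ l := card_image_le.trans (by simp); omega
  have hlow : ∑ p, k p ≤ ∑ x ∈ V, β x := by
    have := sum_le_sum_apply_of_mem_support_prod_X_sub_X_pow u v w V E
      (fun i hi => ⟨mem_union_left _ (mem_image_of_mem u hi),
        mem_union_right _ (mem_image_of_mem v hi)⟩) hne
    simpa [E, sum_image he_inj.injOn, he] using this
  have hcompl : ∑ i ∈ range (n - #V), i ≤ ∑ x ∈ Vᶜ, β x := by
    simpa [card_compl] using sum_range_card_le_sum_of_injOn hβ.injOn (s := Vᶜ)
  have hmono : ∑ i ∈ range (n - 2 * l), i ≤ ∑ i ∈ range (n - #V), i :=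
    sum_le_sum_of_subset (range_subset_range.2 (by omega))
  have htotal := sum_apply_eq_sum_of_mem_support_prod_X_sub_X_pow u v w hne
  rw [← sum_add_sum_compl V] at htotal
  have := sum_range_lt_of_sum_sub_lt k h2l hq
  omega

theorem MvPolynomial.coeff_rename_equiv {R σ τ : Type*} [CommSemiring R] (e : σ ≃ τ)
    (P : MvPolynomial σ R) (δ : τ →₀ ℕ) :
    coeff δ (rename e P) = coeff (δ.equivMapDomain e.symm) P := by
  have := coeff_rename_mapDomain e e.injective P (δ.equivMapDomain e.symm)
  rwa [← Finsupp.equivMapDomain_eq_mapDomain, ← Finsupp.equivMapDomain_trans, e.symm_trans_self,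
    Finsupp.equivMapDomain_refl] at this

theorem MvPolynomial.sum_sign_smul_rename_eq_zero {R ι : Type*} [CommRing R] [Fintype ι]
    [DecidableEq ι] {P : MvPolynomial ι R}
    (hP : ∀ β : ι →₀ ℕ, Function.Injective β → coeff β P = 0) :
    ∑ σ : Equiv.Perm ι, (Equiv.Perm.sign σ : ℤ) • rename σ P = 0 := by
  ext δ
  simp only [coeff_sum, coeff_zero, coeff_smul, coeff_rename_equiv]
  by_cases hδ : Function.Injective δ
  · refine sum_eq_zero fun σ _ => ?_
    rw [hP _ fun a b h => σ.injective (hδ (by simpa using h)), smul_zero]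
  obtain ⟨a, b, hab, hne⟩ := Function.not_injective_iff.1 hδ
  have hswap : ∀ x, δ (Equiv.swap a b x) = δ x := fun x => by
    rcases eq_or_ne x a with rfl | hxa
    · simpa using hab.symm
    rcases eq_or_ne x b with rfl | hxb
    · simpa using hab
    rw [Equiv.swap_apply_of_ne_of_ne hxa hxb]
  refine sum_involution (fun σ _ => Equiv.swap a b * σ) (fun σ _ => ?_) (fun σ _ _ => ?_)
    (fun _ _ => mem_univ _) (fun σ _ => Equiv.swap_mul_self_mul a b σ)
  · have : δ.equivMapDomain (Equiv.swap a b * σ).symm = δ.equivMapDomain σ.symm := by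
      ext x
      simp [hswap]
    rw [this, Equiv.Perm.sign_mul, Equiv.Perm.sign_swap hne]
    simp
  · exact fun h => hne (by simpa using congr($h (σ.symm a)) : b = a).symm

theorem MvPolynomial.prod_monomial {R σ ι : Type*} [CommSemiring R] (s : Finset ι)
    (f : ι → σ →₀ ℕ) (c : ι → R) :
    ∏ i ∈ s, monomial (f i) (c i) = monomial (∑ i ∈ s, f i) (∏ i ∈ s, c i) := by
  classical
  induction s using Finset.induction_on with
  | empty => simp
  | insert a s ha ih => rw [prod_insert ha, ih, monomial_mul, sum_insert ha, prod_insert ha]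

section fFactor

variable {n m : ℕ}

/-- `none` indexes the constant term `1` of `f`, and `some i` the term `a_{i+1} s^{i+1}`. -/
def fTermDegree : Option (Fin m) → ℕ := fun o => o.elim 0 (·.val + 1)

noncomputable def fTermExponent : Option (Fin m) → Fin m →₀ ℕ :=
  fun o => o.elim 0 (Finsupp.single · 1)

theorem fFactor_eq_sum (d : MvPolynomial (Fin n) ℤ) :
    fFactor n m d = ∑ o : Option (Fin m),
      Polynomial.C (monomial (fTermExponent o) (d ^ fTermDegree o)) *
        Polynomial.X ^ fTermDegree o := by
  rw [Fintype.sum_option, fFactor]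
  simp only [fTermExponent, fTermDegree, Option.elim_none, Option.elim_some, pow_zero,
    monomial_zero', map_one, mul_one]
  refine congrArg (1 + ·) (sum_congr rfl fun i _ => ?_)
  rw [← C_mul_X_eq_monomial, mul_comm (C _)]

theorem coeff_coeff_prod_fFactor {ι : Type*} [Fintype ι] [DecidableEq ι]
    (d : ι → MvPolynomial (Fin n) ℤ) (N : ℕ) (α : Fin m →₀ ℕ) :
    coeff α ((∏ i, fFactor n m (d i)).coeff N) =
      ∑ g ∈ univ.filter (fun g : ι → Option (Fin m) =>
          ∑ i, fTermDegree (g i) = N ∧ ∑ i, fTermExponent (g i) = α),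
        ∏ i, d i ^ fTermDegree (g i) := by
  simp_rw [fFactor_eq_sum, Fintype.prod_sum, prod_mul_distrib, ← map_prod, prod_monomial,
    prod_pow_eq_pow_sum, Polynomial.finsetSum_coeff, Polynomial.coeff_C_mul_X_pow, coeff_sum,
    sum_filter]
  refine sum_congr rfl fun g _ => ?_
  split_ifs <;> simp_all [coeff_monomial]

theorem fFactor_map (f : MvPolynomial (Fin n) ℤ →+* MvPolynomial (Fin n) ℤ)
    (d : MvPolynomial (Fin n) ℤ) :
    (fFactor n m d).map (MvPolynomial.map f) = fFactor n m (f d) := by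
  simp [fFactor, Polynomial.map_sum]

theorem coeff_coeff_sum_sign_smul_prod_fFactor (s : Finset (Fin n × Fin n)) (N : ℕ)
    (α : Fin m →₀ ℕ) :
    coeff α ((∑ σ : Equiv.Perm (Fin n), (Equiv.Perm.sign σ : ℤ) •
        ∏ p ∈ s, fFactor n m (X (σ p.1) - X (σ p.2))).coeff N) =
      ∑ σ : Equiv.Perm (Fin n), (Equiv.Perm.sign σ : ℤ) •
        rename σ (coeff α ((∏ p ∈ s, fFactor n m (X p.1 - X p.2)).coeff N)) := by
  simp only [Polynomial.finsetSum_coeff, Polynomial.coeff_smul, coeff_sum, coeff_smul]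
  refine sum_congr rfl fun σ _ => ?_
  have : ∏ p ∈ s, fFactor n m (X (σ p.1) - X (σ p.2)) =
      (∏ p ∈ s, fFactor n m (X p.1 - X p.2)).map (MvPolynomial.map (rename σ).toRingHom) := by
    simp [Polynomial.map_prod, fFactor_map]
  rw [this, Polynomial.coeff_map, MvPolynomial.coeff_map]
  rfl

theorem exists_eq_some_of_sum_fTermExponent_apply_ne_zero {ι : Type*} [Fintype ι]
    {g : ι → Option (Fin m)} {j : Fin m} (h : (∑ i, fTermExponent (g i)) j ≠ 0) :
    ∃ i, g i = some j := by
  rw [Finsupp.finsetSum_apply] at h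
  obtain ⟨i, -, hi⟩ := exists_ne_zero_of_sum_ne_zero h
  refine ⟨i, ?_⟩
  cases hg : g i with
  | none => simp [hg, fTermExponent] at hi
  | some j' => simpa [hg, fTermExponent, Finsupp.single_apply] using hi

end fFactor

theorem s_omega_flag_vanishes_small_q_general (n l : ℕ)
    (ω : Fin (n * (n - 1) / 2) → ℕ)
    (k : Fin l → ℕ) (hkinj : Function.Injective k)
    (hk1 : ∀ p, 1 ≤ k p) (hk2 : ∀ p, k p ≤ 2 * n - 3)
    (hsupp : ∀ j : Fin (n * (n - 1) / 2), ω j ≠ 0 ↔ ∃ p : Fin l, k p = j.1 + 1)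
    (h2l : 2 * l ≤ n)
    (hq : ∑ p : Fin l, (2 * (n - 1) - k p) < l * (2 * l - 1)) :
    MvPolynomial.coeff (Finsupp.equivFunOnFinite.symm ω)
      ((∑ σ : Equiv.Perm (Fin n),
          (Equiv.Perm.sign σ : ℤ) •
            ∏ p ∈ flagPairs n,
              fFactor n (n * (n - 1) / 2)
                (MvPolynomial.X (σ p.1) - MvPolynomial.X (σ p.2))).coeff
        (n * (n - 1) / 2)) = 0 := by
  classical
  rw [coeff_coeff_sum_sign_smul_prod_fFactor]
  refine sum_sign_smul_rename_eq_zero fun β hβ => ?_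
  rw [← prod_coe_sort, coeff_coeff_prod_fFactor, coeff_sum]
  refine sum_eq_zero fun g hg => ?_
  obtain ⟨hdeg, hexp⟩ := (mem_filter.1 hg).2
  refine coeff_prod_X_sub_X_pow_eq_zero_of_injective (fun p : flagPairs n => p.1.1)
    (fun p => p.1.2) (fun p => fTermDegree (g p)) (by rw [hdeg, sum_range_id]) k hkinj
    (fun p => ?_) h2l hq hβ
  have hpos := hk1 p
  have hkp : k p - 1 < n * (n - 1) / 2 := by
    have := two_mul_sub_three_le_mul_sub_one_div_two n
    have := hk2 p
    omega
  have hωp : ω ⟨k p - 1, hkp⟩ ≠ 0 := (hsupp _).2 ⟨p, by simp only; omega⟩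
  obtain ⟨i, hi⟩ := exists_eq_some_of_sum_fTermExponent_apply_ne_zero (j := ⟨k p - 1, hkp⟩)
    (by rwa [hexp])
  exact ⟨i, by simp only [hi, fTermDegree, Option.elim_some]; omega⟩

/-- Let `ω` with `‖ω‖ = m = n(n−1)/2` have its nonzero entries exactly at
the distinct positions `k₁, …, k_l`, each satisfying `1 ≤ k_p ≤ 2n−3`; write
`k_p = 2(n−1) − q_p` with `q_p ≥ 1`.  If `n ≥ 2l` and `Σ_p q_p < l(2l−1)`, then the
coefficient of `t^m a₁^{i₁} ⋯ a_m^{i_m}` in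
`G(t) = Σ_σ sgn(σ) Π_{i<j} f(t(X_{σ(i)}−X_{σ(j)}))` is the zero polynomial; i.e.
`s_ω(U(n)/Tⁿ) = 0`. -/
theorem s_omega_flag_vanishes_small_q (n l : ℕ) (hn : 2 ≤ n) (hl : 1 ≤ l)
    (ω : Fin (n * (n - 1) / 2) → ℕ)
    (hω : ∑ j : Fin (n * (n - 1) / 2), (j.1 + 1) * ω j = n * (n - 1) / 2)
    (k : Fin l → ℕ) (hkinj : Function.Injective k)
    (hk1 : ∀ p, 1 ≤ k p) (hk2 : ∀ p, k p ≤ 2 * n - 3)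
    (hsupp : ∀ j : Fin (n * (n - 1) / 2), ω j ≠ 0 ↔ ∃ p : Fin l, k p = j.1 + 1)
    (h2l : 2 * l ≤ n)
    (hq : ∑ p : Fin l, (2 * (n - 1) - k p) < l * (2 * l - 1)) :
    MvPolynomial.coeff (Finsupp.equivFunOnFinite.symm ω)
      ((∑ σ : Equiv.Perm (Fin n),
          (Equiv.Perm.sign σ : ℤ) •
            ∏ p ∈ flagPairs n,
              fFactor n (n * (n - 1) / 2)
                (MvPolynomial.X (σ p.1) - MvPolynomial.X (σ p.2))).coeff
        (n * (n - 1) / 2)) = 0 :=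
  s_omega_flag_vanishes_small_q_general n l ω k hkinj hk1 hk2 hsupp h2l hq
end
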